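/- Let a₀, a₁, b₁ > 0 and 0 ≤ L < π/2. Then inf { F_B(e₀/a₀)·a₀ + F_B((e₀−e₁)/a₁)·a₁ + F_B(e₁/b₁)·b₁ − 2e₁·log(cos L) : e₀, e₁ ∈ ℝ with e₀ ≥ e₁ ≥ 0 } = a₀ + a₁ + b₁ − 2√(a₀(a₁ + b₁ cos²L)). -/

import Mathlib

/-!
Convex duality. The Fenchel–Young inequality `F_B(e/a)·a ≥ e·s − a(eˢ − 1)` applied with the
potentials `−log r`, `log r`, `log r + 2 log c` to the three entropy terms makes all terms linear
in `e₀, e₁` cancel, so every competitor costs at least `a₀ + a₁ + b₁ − (a₀/r + r(a₁ + b₁c²))`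
for each `r > 0`. At `r = √(a₀/(a₁ + b₁c²))` this bound is the claimed value, and the three
Fenchel–Young inequalities are equalities at `e₀ = a₀/r`, `e₁ = b₁c²r`.
-/

/-- The Boltzmann function `F_B(z) = z log z − z + 1` (equal to `1` at `z = 0`). -/
noncomputable def FB (z : ℝ) : ℝ := z * Real.log z - z + 1

open Real

noncomputable def massSplittingCost (a₀ a₁ b₁ c e₀ e₁ : ℝ) : ℝ :=
  FB (e₀ / a₀) * a₀ + FB ((e₀ - e₁) / a₁) * a₁ + FB (e₁ / b₁) * b₁ - 2 * e₁ * log c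

lemma FB_div_mul (e : ℝ) {a : ℝ} (ha : a ≠ 0) : FB (e / a) * a = e * log (e / a) - e + a := by
  unfold FB
  field_simp

lemma le_FB_div_mul {e a : ℝ} (s : ℝ) (he : 0 ≤ e) (ha : 0 < a) :
    e * s - a * (exp s - 1) ≤ FB (e / a) * a := by
  rw [FB_div_mul e ha.ne']
  rcases he.eq_or_lt with rfl | he
  · simp only [zero_mul, zero_div, log_zero, mul_zero, zero_sub, sub_zero]
    nlinarith [exp_pos s]
  · have key := add_one_le_exp (s - log (e / a))
    rw [exp_sub, exp_log (by positivity)] at key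
    have : e * (s - log (e / a) + 1) ≤ a * exp s :=
      calc e * (s - log (e / a) + 1) ≤ e * (exp s / (e / a)) := by gcongr
        _ = a * exp s := by field_simp
    linarith

section MassSplitting

variable {a₀ a₁ b₁ c : ℝ}

lemma massSplittingCost_ge {e₀ e₁ r : ℝ} (ha₀ : 0 < a₀) (ha₁ : 0 < a₁) (hb₁ : 0 < b₁)
    (hc : 0 < c) (hr : 0 < r) (he : e₁ ≤ e₀) (he₁ : 0 ≤ e₁) :
    a₀ + a₁ + b₁ - (a₀ / r + r * (a₁ + b₁ * c ^ 2)) ≤ massSplittingCost a₀ a₁ b₁ c e₀ e₁ := by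
  have h₀ := le_FB_div_mul (-log r) (he₁.trans he) ha₀
  have h₁ := le_FB_div_mul (log r) (sub_nonneg.mpr he) ha₁
  have h₂ := le_FB_div_mul (log r + 2 * log c) he₁ hb₁
  rw [exp_neg, exp_log hr] at h₀
  rw [exp_log hr] at h₁
  have hexp : exp (log r + 2 * log c) = r * c ^ 2 := by
    rw [exp_add, exp_log hr, two_mul, exp_add, exp_log hc]; ring
  rw [hexp] at h₂
  unfold massSplittingCost
  rw [div_eq_mul_inv]
  linarith

lemma massSplittingCost_optimal {r : ℝ} (ha₁ : 0 < a₁) (hb₁ : 0 < b₁) (hc : 0 < c) (hr : 0 < r)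
    (hopt : a₀ = r ^ 2 * (a₁ + b₁ * c ^ 2)) :
    massSplittingCost a₀ a₁ b₁ c (a₀ / r) (b₁ * c ^ 2 * r)
      = a₀ + a₁ + b₁ - (a₀ / r + r * (a₁ + b₁ * c ^ 2)) := by
  have ha₀ : 0 < a₀ := by rw [hopt]; positivity
  have he₀ : a₀ / r = r * (a₁ + b₁ * c ^ 2) := by rw [div_eq_iff hr.ne', hopt]; ring
  have hq₀ : r * (a₁ + b₁ * c ^ 2) / a₀ = r⁻¹ := by rw [hopt]; field_simp
  have hq₁ : (r * (a₁ + b₁ * c ^ 2) - b₁ * c ^ 2 * r) / a₁ = r := by field_simp; ring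
  have hq₂ : b₁ * c ^ 2 * r / b₁ = c ^ 2 * r := by field_simp
  unfold massSplittingCost
  rw [he₀, FB_div_mul _ ha₀.ne', FB_div_mul _ ha₁.ne', FB_div_mul _ hb₁.ne', hq₀, hq₁, hq₂,
    log_inv, log_mul (by positivity) hr.ne', log_pow]
  push_cast
  ring

end MassSplitting

lemma exists_div_add_mul_eq_two_sqrt {p q : ℝ} (hp : 0 < p) (hq : 0 < q) :
    ∃ r > 0, p = r ^ 2 * q ∧ p / r + r * q = 2 * √(p * q) := by
  have hs : 0 < √(p * q) := by positivity
  have hs2 : √(p * q) ^ 2 = p * q := sq_sqrt (by positivity)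
  refine ⟨√(p * q) / q, by positivity, ?_, ?_⟩
  · field_simp
    rw [hs2]
  · field_simp
    rw [hs2]
    ring

theorem isLeast_massSplittingCost {a₀ a₁ b₁ c : ℝ} (ha₀ : 0 < a₀) (ha₁ : 0 < a₁) (hb₁ : 0 < b₁)
    (hc : 0 < c) :
    IsLeast {v | ∃ e₀ e₁ : ℝ, e₁ ≤ e₀ ∧ 0 ≤ e₁ ∧ v = massSplittingCost a₀ a₁ b₁ c e₀ e₁}
      (a₀ + a₁ + b₁ - 2 * √(a₀ * (a₁ + b₁ * c ^ 2))) := by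
  obtain ⟨r, hr, hopt, hmin⟩ :=
    exists_div_add_mul_eq_two_sqrt ha₀ (by positivity : 0 < a₁ + b₁ * c ^ 2)
  rw [← hmin]
  refine ⟨⟨a₀ / r, b₁ * c ^ 2 * r, ?_, by positivity,
    (massSplittingCost_optimal ha₁ hb₁ hc hr hopt).symm⟩, ?_⟩
  · rw [le_div_iff₀ hr, hopt]
    nlinarith [mul_pos ha₁ (pow_pos hr 2)]
  · rintro v ⟨e₀, e₁, he, he₁, rfl⟩
    exact massSplittingCost_ge ha₀ ha₁ hb₁ hc hr he he₁

theorem entropyTransport_massSplitting (a₀ a₁ b₁ L : ℝ)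
    (ha₀ : 0 < a₀) (ha₁ : 0 < a₁) (hb₁ : 0 < b₁) (hL₀ : 0 ≤ L) (hL : L < Real.pi / 2) :
    sInf { v : ℝ | ∃ e₀ e₁ : ℝ, e₁ ≤ e₀ ∧ 0 ≤ e₁ ∧
        v = FB (e₀ / a₀) * a₀ + FB ((e₀ - e₁) / a₁) * a₁ + FB (e₁ / b₁) * b₁
              - 2 * e₁ * Real.log (Real.cos L) }
      = a₀ + a₁ + b₁ - 2 * Real.sqrt (a₀ * (a₁ + b₁ * Real.cos L ^ 2)) :=
  (isLeast_massSplittingCost ha₀ ha₁ hb₁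
    (cos_pos_of_mem_Ioo ⟨by linarith [pi_pos], hL⟩)).csInf_eq
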